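/- arXiv:1904.02993 — 3 statements merged into one kernel-verified Lean document; each statement's English description precedes it below -/
import Mathlib

section
/- Let v : ℝⁿ → ℝᵐ be an affine 1-Lipschitz map, and define Φ : ℝᵐ × ℝⁿ × ℝⁿ → ℝ by Φ(x, y, y') = ‖x‖² + 2⟨x, v(y) − v(y')⟩ − ‖y − y'‖² + ‖v(y) − v(y')‖². Then Φ is a K-function. -/
/-!
Writing `Φ x y y' = ‖x + (v y - v y')‖ ^ 2 - ‖y - y'‖ ^ 2`, convexity in `x` is clear. For the
averaging inequality put `uᵢ = xᵢ + v yᵢ` and use the weighted variance identity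
`∑ᵢⱼ λᵢλⱼ‖aᵢ - aⱼ‖² = 2 ∑ᵢ λᵢ‖aᵢ - c‖² - 2‖∑ᵢ λᵢaᵢ - c‖²`, once for `u` with
`c = ∑ⱼ λⱼxⱼ + v y` and once for `y` with `c = y`. Since `v` is affine, `∑ᵢ λᵢuᵢ - c = v ȳ - v y`
with `ȳ = ∑ᵢ λᵢyᵢ`, so the difference of the two sides of the inequality is
`2 (‖ȳ - y‖² - ‖v ȳ - v y‖²) ≥ 0` because `v` is 1-Lipschitz.
-/

open scoped RealInnerProductSpace
open Finset

/-- A `K`-function in the sense of Minty: lower semicontinuous and convex in the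
first variable, and satisfying the averaging inequality. -/
def IsKFunction (m n : ℕ)
    (Φ : EuclideanSpace ℝ (Fin m) → EuclideanSpace ℝ (Fin n) → EuclideanSpace ℝ (Fin n) → ℝ) :
    Prop :=
  (∀ y y' : EuclideanSpace ℝ (Fin n),
      LowerSemicontinuous (fun x => Φ x y y') ∧
      ConvexOn ℝ Set.univ (fun x => Φ x y y')) ∧
  (∀ (l : ℕ) (x : Fin l → EuclideanSpace ℝ (Fin m))
      (yv : Fin l → EuclideanSpace ℝ (Fin n)) (lam : Fin l → ℝ),
    (∀ i, 0 ≤ lam i) → (∑ i, lam i = 1) →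
    ∀ y : EuclideanSpace ℝ (Fin n),
      ∑ i, ∑ j, lam i * lam j * Φ (x i - x j) (yv i) (yv j) ≥
        2 * ∑ i, lam i * Φ (x i - ∑ j, lam j • x j) (yv i) y)

theorem map_sum_smul_of_map_convex_combo {ι E F : Type*} [AddCommGroup E] [Module ℝ E]
    [AddCommGroup F] [Module ℝ F] {f : E → F}
    (hf : ∀ x y : E, ∀ t ∈ Set.Icc (0 : ℝ) 1, f (t • x + (1 - t) • y) = t • f x + (1 - t) • f y)
    {s : Finset ι} {w : ι → ℝ} (hw₀ : ∀ i ∈ s, 0 ≤ w i) (hw₁ : ∑ i ∈ s, w i = 1) (p : ι → E) :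
    f (∑ i ∈ s, w i • p i) = ∑ i ∈ s, w i • f (p i) := by
  -- Composed with any linear functional, `f` is convex and concave, so Jensen holds with equality.
  rw [← sub_eq_zero, ← Module.forall_dual_apply_eq_zero_iff ℝ]
  intro φ
  have hφf : ∀ x y : E, ∀ a b : ℝ, 0 ≤ a → 0 ≤ b → a + b = 1 →
      φ (f (a • x + b • y)) = a • φ (f x) + b • φ (f y) := by
    rintro x y a b ha hb hab
    obtain rfl : b = 1 - a := by linarith
    rw [hf x y a ⟨ha, by linarith⟩, map_add, map_smul, map_smul]
  have hconvex : ConvexOn ℝ Set.univ (φ ∘ f) :=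
    ⟨convex_univ, fun x _ y _ a b ha hb hab => (hφf x y a b ha hb hab).le⟩
  have hconcave : ConcaveOn ℝ Set.univ (φ ∘ f) :=
    ⟨convex_univ, fun x _ y _ a b ha hb hab => (hφf x y a b ha hb hab).ge⟩
  have hJensen := le_antisymm (hconvex.map_sum_le hw₀ hw₁ fun i _ => Set.mem_univ (p i))
    (hconcave.le_map_sum hw₀ hw₁ fun i _ => Set.mem_univ (p i))
  simpa [map_sum, sub_eq_zero] using hJensen

section
variable {ι E F : Type*} [NormedAddCommGroup E] [InnerProductSpace ℝ E]
  [NormedAddCommGroup F] [InnerProductSpace ℝ F] {s : Finset ι} {w : ι → ℝ}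

theorem sum_sum_mul_norm_sub_sq (hw : ∑ i ∈ s, w i = 1) (a : ι → E) (c : E) :
    ∑ i ∈ s, ∑ j ∈ s, w i * w j * ‖a i - a j‖ ^ 2 =
      2 * ∑ i ∈ s, w i * ‖a i - c‖ ^ 2 - 2 * ‖∑ i ∈ s, w i • a i - c‖ ^ 2 := by
  set b := fun i => a i - c
  have hmean : ∑ i ∈ s, w i • a i - c = ∑ i ∈ s, w i • b i := by
    simp only [b, smul_sub, sum_sub_distrib, ← sum_smul, hw, one_smul]
  have hgram : ‖∑ i ∈ s, w i • b i‖ ^ 2 = ∑ i ∈ s, ∑ j ∈ s, w i * w j * ⟪b i, b j⟫ := by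
    simp only [← real_inner_self_eq_norm_sq, sum_inner, inner_sum, real_inner_smul_left,
      real_inner_smul_right, mul_assoc]
    exact sum_congr rfl fun i _ => sum_congr rfl fun j _ => by rw [real_inner_comm]
  have hdiag : ∑ i ∈ s, ∑ j ∈ s, w i * w j * ‖b i‖ ^ 2 = ∑ i ∈ s, w i * ‖b i‖ ^ 2 := by
    simp only [mul_right_comm _ _ (‖_‖ ^ 2), ← mul_sum, hw, mul_one]
  calc ∑ i ∈ s, ∑ j ∈ s, w i * w j * ‖a i - a j‖ ^ 2
      = ∑ i ∈ s, ∑ j ∈ s, (w i * w j * ‖b i‖ ^ 2 + w j * w i * ‖b j‖ ^ 2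
          - 2 * (w i * w j * ⟪b i, b j⟫)) := by
        refine sum_congr rfl fun i _ => sum_congr rfl fun j _ => ?_
        rw [← sub_sub_sub_cancel_right (a i) (a j) c, norm_sub_sq_real]
        ring
    _ = 2 * ∑ i ∈ s, w i * ‖b i‖ ^ 2 - 2 * ‖∑ i ∈ s, w i • b i‖ ^ 2 := by
        rw [hgram]
        simp only [sum_sub_distrib, sum_add_distrib, ← mul_sum]
        rw [sum_comm (f := fun i j => w j * w i * ‖b j‖ ^ 2), hdiag]
        ring
    _ = _ := by rw [hmean]

theorem convexOn_norm_add_sq_sub (c : E) (d : ℝ) :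
    ConvexOn ℝ Set.univ fun x : E => ‖x + c‖ ^ 2 - d := by
  have hsq : ConvexOn ℝ Set.univ fun x : E => ‖x‖ ^ 2 :=
    convexOn_univ_norm.pow (fun x _ => norm_nonneg x) 2
  exact (hsq.translate_left c).sub (concaveOn_const d convex_univ)

theorem two_mul_sum_le_sum_sum_of_affine_of_lipschitz {v : E → F}
    (hv : ∀ x y : E, ∀ t ∈ Set.Icc (0 : ℝ) 1, v (t • x + (1 - t) • y) = t • v x + (1 - t) • v y)
    (hlip : ∀ x y : E, ‖v x - v y‖ ≤ ‖x - y‖)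
    (hw₀ : ∀ i ∈ s, 0 ≤ w i) (hw₁ : ∑ i ∈ s, w i = 1)
    (x : ι → F) (y : ι → E) (y₀ : E) :
    2 * ∑ i ∈ s, w i * (‖x i - ∑ j ∈ s, w j • x j + (v (y i) - v y₀)‖ ^ 2 - ‖y i - y₀‖ ^ 2) ≤
      ∑ i ∈ s, ∑ j ∈ s, w i * w j * (‖x i - x j + (v (y i) - v (y j))‖ ^ 2 - ‖y i - y j‖ ^ 2) := by
  set u : ι → F := fun i => x i + v (y i)
  set c : F := ∑ j ∈ s, w j • x j + v y₀
  have hu : ∀ i j, x i - x j + (v (y i) - v (y j)) = u i - u j := fun i j => by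
    simp only [u]; abel
  have hc : ∀ i, x i - ∑ j ∈ s, w j • x j + (v (y i) - v y₀) = u i - c := fun i => by
    simp only [u, c]; abel
  have hmean : ∑ i ∈ s, w i • u i - c = v (∑ i ∈ s, w i • y i) - v y₀ := by
    simp only [u, c, smul_add, sum_add_distrib, map_sum_smul_of_map_convex_combo hv hw₀ hw₁]
    abel
  have hlip_sq : ‖v (∑ i ∈ s, w i • y i) - v y₀‖ ^ 2 ≤ ‖∑ i ∈ s, w i • y i - y₀‖ ^ 2 := by
    gcongr
    exact hlip _ _
  simp only [hu, hc, mul_sub, sum_sub_distrib]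
  rw [sum_sum_mul_norm_sub_sq hw₁ u c, sum_sum_mul_norm_sub_sq hw₁ y y₀, hmean]
  linarith

end

theorem stmt_13 (n m : ℕ)
    (v : EuclideanSpace ℝ (Fin n) → EuclideanSpace ℝ (Fin m))
    (hvaff : ∀ x y : EuclideanSpace ℝ (Fin n), ∀ t ∈ Set.Icc (0 : ℝ) 1,
      v (t • x + (1 - t) • y) = t • v x + (1 - t) • v y)
    (hvlip : ∀ x y : EuclideanSpace ℝ (Fin n), ‖v x - v y‖ ≤ ‖x - y‖)
    (Φ : EuclideanSpace ℝ (Fin m) → EuclideanSpace ℝ (Fin n) → EuclideanSpace ℝ (Fin n) → ℝ)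
    (hΦ : ∀ x y y', Φ x y y' =
      ‖x‖ ^ 2 + 2 * ⟪x, v y - v y'⟫ - ‖y - y'‖ ^ 2 + ‖v y - v y'‖ ^ 2) :
    IsKFunction m n Φ := by
  have hΦ' : ∀ x y y', Φ x y y' = ‖x + (v y - v y')‖ ^ 2 - ‖y - y'‖ ^ 2 := fun x y y' => by
    rw [hΦ, norm_add_sq_real]; ring
  simp only [IsKFunction, hΦ']
  refine ⟨fun y y' => ⟨?_, convexOn_norm_add_sq_sub _ _⟩, fun l x yv lam h0 h1 y => ?_⟩
  · exact Continuous.lowerSemicontinuous (by fun_prop)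
  · exact two_mul_sum_le_sum_sum_of_affine_of_lipschitz hvaff hvlip (fun i _ => h0 i) h1 x yv y
end

section
/- Let v₁, …, v_k ∈ ℝᵐ, let w ∈ ℝᵐ, and let u₁, …, u_k ∈ ℝᵐ satisfy ‖uᵢ − uⱼ‖ ≤ ‖vᵢ − vⱼ‖ for all i, j = 1, …, k. Then there exists p ∈ ℝᵐ such that ‖p − uᵢ‖ ≤ ‖w − vᵢ‖ for all i = 1, …, k and p − w lies in the convex hull of {u₁ − v₁, …, u_k − v_k}. -/
/-!
Translate so that the new point is `w + x` with `x ∈ C := conv {uᵢ - vᵢ}`, and put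
`hᵢ x = ‖w + x - uᵢ‖² - ‖w - vᵢ‖²`. These are convex, and for every probability vector `μ`
the barycentre `x = ∑ μⱼ (uⱼ - vⱼ)` satisfies `∑ μᵢ hᵢ x ≤ 0`: writing `hᵢ x = ∑ⱼ μⱼ Fᵢⱼ`, the
symmetrised `Fᵢⱼ + Fⱼᵢ = ‖uⱼ - uᵢ‖² - ‖vⱼ - vᵢ‖²` is nonpositive by the hypothesis (Minty's
argument). A separating hyperplane in `ℝ^k` turns this "for every averaged inequality" into a
single `x ∈ C` with all `hᵢ x ≤ 0`.
-/

open scoped InnerProductSpace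
open Finset
open scoped Pointwise

lemma sum_sum_mul_mul_nonpos {ι : Type*} [Fintype ι] {μ : ι → ℝ} (hμ : ∀ i, 0 ≤ μ i)
    {F : ι → ι → ℝ} (hF : ∀ i j, F i j + F j i ≤ 0) :
    ∑ i, ∑ j, μ i * μ j * F i j ≤ 0 := by
  have hsymm : 2 * ∑ i, ∑ j, μ i * μ j * F i j = ∑ i, ∑ j, μ i * μ j * (F i j + F j i) := by
    rw [two_mul]
    nth_rewrite 2 [Finset.sum_comm]
    simp only [← Finset.sum_add_distrib]
    exact sum_congr rfl fun i _ => sum_congr rfl fun j _ => by ring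
  have : ∑ i, ∑ j, μ i * μ j * (F i j + F j i) ≤ 0 :=
    sum_nonpos fun i _ => sum_nonpos fun j _ =>
      mul_nonpos_of_nonneg_of_nonpos (mul_nonneg (hμ i) (hμ j)) (hF i j)
  linarith

section InnerProductSpace

variable {E : Type*} [NormedAddCommGroup E] [InnerProductSpace ℝ E]

lemma norm_add_sq_sub_norm_sq (y b : E) : ‖y + b‖ ^ 2 - ‖b‖ ^ 2 = ⟪y + (2 : ℝ) • b, y⟫_ℝ := by
  rw [norm_add_sq_real, inner_add_left, real_inner_self_eq_norm_sq, real_inner_smul_left,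
    real_inner_comm]
  ring

theorem sum_mul_norm_sq_sub_norm_sq_nonpos {ι : Type*} [Fintype ι] {u v : ι → E}
    (huv : ∀ i j, ‖u i - u j‖ ≤ ‖v i - v j‖) (w : E) {μ : ι → ℝ} (hμ : μ ∈ stdSimplex ℝ ι) :
    ∑ i, μ i * (‖w + ∑ j, μ j • (u j - v j) - u i‖ ^ 2 - ‖w - v i‖ ^ 2) ≤ 0 := by
  set a : ι → E := fun i => u i - v i
  set x : E := ∑ j, μ j • a j
  set F : ι → ι → ℝ := fun i j => ⟪x - a i + (2 : ℝ) • (w - v i), a j - a i⟫_ℝ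
  have hrow : ∀ i, ‖w + x - u i‖ ^ 2 - ‖w - v i‖ ^ 2 = ∑ j, μ j * F i j := by
    intro i
    have hx : x - a i = ∑ j, μ j • (a j - a i) := by
      simp only [smul_sub, sum_sub_distrib, ← sum_smul, hμ.2, one_smul, x]
    rw [show w + x - u i = x - a i + (w - v i) by simp only [a]; abel,
      norm_add_sq_sub_norm_sq]
    nth_rewrite 2 [hx]
    simp only [inner_sum, real_inner_smul_right, F]
  have hF : ∀ i j, F i j + F j i ≤ 0 := by
    intro i j
    have hsum : F i j + F j i = ‖u j - u i‖ ^ 2 - ‖v j - v i‖ ^ 2 := by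
      rw [show u j - u i = a j - a i + (v j - v i) by simp only [a]; abel,
        norm_add_sq_sub_norm_sq]
      simp only [F]
      rw [← neg_sub (a j) (a i), inner_neg_right, ← sub_eq_add_neg, ← inner_sub_left]
      congr 1
      module
    rw [hsum, sub_nonpos]
    exact pow_le_pow_left₀ (norm_nonneg _) (huv j i) 2
  calc ∑ i, μ i * (‖w + x - u i‖ ^ 2 - ‖w - v i‖ ^ 2)
      = ∑ i, ∑ j, μ i * μ j * F i j := by simp only [hrow, mul_sum, mul_assoc]
    _ ≤ 0 := sum_sum_mul_mul_nonpos hμ.1 hF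

end InnerProductSpace

lemma nonneg_of_forall_lt_add_mul {a b s : ℝ} (h : ∀ t : ℝ, 0 ≤ t → s < a + t * b) :
    0 ≤ b := by
  by_contra! hb
  have hsa : s < a := by simpa using h 0 le_rfl
  have := h ((a - s) / -b) (div_nonneg (sub_nonneg.2 hsa.le) (neg_nonneg.2 hb.le))
  rw [div_mul_eq_mul_div, div_neg, mul_div_cancel_right₀ _ hb.ne] at this
  linarith

section Separation

variable {ι : Type*} [Fintype ι]

theorem exists_stdSimplex_forall_sum_mul_pos {S : Set (ι → ℝ)} (hconv : Convex ℝ S)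
    (hclosed : IsClosed S) (hup : ∀ z ∈ S, ∀ z', z ≤ z' → z' ∈ S) (hne : S.Nonempty)
    (h0 : (0 : ι → ℝ) ∉ S) :
    ∃ μ ∈ stdSimplex ℝ ι, ∀ z ∈ S, 0 < ∑ i, μ i * z i := by
  classical
  obtain ⟨f, s, hf0, hfS⟩ := geometric_hahn_banach_point_closed hconv hclosed h0
  have hs : 0 < s := by simpa using hf0
  set φ : ι → ℝ := fun i => f (Pi.single i 1)
  have hf : ∀ z, f z = ∑ i, z i * φ i := fun z => by
    conv_lhs => rw [pi_eq_sum_univ' z]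
    simp [φ]
  obtain ⟨z₀, hz₀⟩ := hne
  have hφ : ∀ i, 0 ≤ φ i := fun i => by
    refine nonneg_of_forall_lt_add_mul (a := f z₀) (s := s) fun t ht => ?_
    have hmem : z₀ + t • Pi.single i 1 ∈ S :=
      hup z₀ hz₀ _ (le_add_of_nonneg_right (smul_nonneg ht (Pi.single_nonneg.2 zero_le_one)))
    simpa [φ] using hfS _ hmem
  have hT : 0 < ∑ i, φ i := by
    have hne : ∑ i, z₀ i * φ i ≠ 0 := by
      rw [← hf]
      exact (hs.trans (hfS _ hz₀)).ne'
    obtain ⟨i, -, hi⟩ := exists_ne_zero_of_sum_ne_zero hne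
    exact sum_pos' (fun j _ => hφ j) ⟨i, mem_univ i, (hφ i).lt_of_ne' (right_ne_zero_of_mul hi)⟩
  refine ⟨fun i => φ i / ∑ j, φ j,
    ⟨fun i => div_nonneg (hφ i) hT.le, by rw [← sum_div, div_self hT.ne']⟩, fun z hz => ?_⟩
  have hfz : ∑ i, φ i / (∑ j, φ j) * z i = f z / ∑ j, φ j := by
    rw [hf, sum_div]
    exact sum_congr rfl fun i _ => by ring
  rw [hfz]
  exact div_pos (hs.trans (hfS z hz)) hT

theorem exists_forall_nonpos_of_forall_stdSimplex {E : Type*} [AddCommGroup E] [Module ℝ E]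
    [TopologicalSpace E] {C : Set E} (hC : Convex ℝ C) (hCc : IsCompact C)
    (hCne : C.Nonempty) {h : ι → E → ℝ} (hconv : ∀ i, ConvexOn ℝ C (h i))
    (hcont : ∀ i, ContinuousOn (h i) C)
    (hμ : ∀ μ ∈ stdSimplex ℝ ι, ∃ x ∈ C, ∑ i, μ i * h i x ≤ 0) :
    ∃ x ∈ C, ∀ i, h i x ≤ 0 := by
  set H : E → ι → ℝ := fun x i => h i x
  set S : Set (ι → ℝ) := {z | ∃ x ∈ C, H x ≤ z}
  have hS_convex : Convex ℝ S := by
    rintro _ ⟨x, hx, hxz⟩ _ ⟨y, hy, hyz⟩ a b ha hb hab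
    refine ⟨a • x + b • y, hC hx hy ha hb hab, fun i => ?_⟩
    calc h i (a • x + b • y) ≤ a • h i x + b • h i y := (hconv i).2 hx hy ha hb hab
      _ ≤ _ := add_le_add (smul_le_smul_of_nonneg_left (hxz i) ha)
          (smul_le_smul_of_nonneg_left (hyz i) hb)
  have hS_closed : IsClosed S := by
    have hS : S = H '' C + Set.Ici (0 : ι → ℝ) := by
      ext z
      constructor
      · rintro ⟨x, hx, hxz⟩
        exact ⟨H x, ⟨x, hx, rfl⟩, z - H x, sub_nonneg.2 hxz, add_sub_cancel _ _⟩
      · rintro ⟨_, ⟨x, hx, rfl⟩, t, ht, rfl⟩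
        exact ⟨x, hx, le_add_of_nonneg_right ht⟩
    rw [hS]
    exact isClosed_Ici.add_left_of_isCompact (hCc.image_of_continuousOn (continuousOn_pi.2 hcont))
  have hS_up : ∀ z ∈ S, ∀ z', z ≤ z' → z' ∈ S := fun _ ⟨x, hx, hxz⟩ _ hzz' =>
    ⟨x, hx, hxz.trans hzz'⟩
  by_cases h0 : (0 : ι → ℝ) ∈ S
  · obtain ⟨x, hx, hx0⟩ := h0
    exact ⟨x, hx, hx0⟩
  obtain ⟨μ, hμS, hpos⟩ := exists_stdSimplex_forall_sum_mul_pos hS_convex hS_closed hS_up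
    (hCne.elim fun x hx => ⟨H x, x, hx, le_rfl⟩) h0
  obtain ⟨x, hx, hxμ⟩ := hμ μ hμS
  exact absurd hxμ (hpos (H x) ⟨x, hx, le_rfl⟩).not_ge

end Separation

theorem stmt_17 (m k : ℕ) (hk : 0 < k)
    (v : Fin k → EuclideanSpace ℝ (Fin m)) (w : EuclideanSpace ℝ (Fin m))
    (u : Fin k → EuclideanSpace ℝ (Fin m))
    (hmaj : ∀ i j, ‖u i - u j‖ ≤ ‖v i - v j‖) :
    ∃ p : EuclideanSpace ℝ (Fin m),
      (∀ i, ‖p - u i‖ ≤ ‖w - v i‖) ∧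
      p - w ∈ convexHull ℝ (Set.range fun i => u i - v i) := by
  set C := convexHull ℝ (Set.range fun i => u i - v i)
  have hC : Convex ℝ C := convex_convexHull ℝ _
  have hCne : C.Nonempty := ⟨_, subset_convexHull ℝ _ ⟨⟨0, hk⟩, rfl⟩⟩
  have hconv : ∀ i, ConvexOn ℝ C fun x => ‖w + x - u i‖ ^ 2 - ‖w - v i‖ ^ 2 := fun i =>
    (((convexOn_dist (u i - w) hC).pow (fun _ _ => dist_nonneg) 2).sub
      (concaveOn_const (‖w - v i‖ ^ 2) hC)).congr fun x _ => by
        simp [dist_eq_norm, sub_sub_eq_add_sub, add_comm x w]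
  obtain ⟨x, hxC, hx⟩ := exists_forall_nonpos_of_forall_stdSimplex hC
    ((Set.finite_range _).isCompact_convexHull ℝ) hCne hconv (fun i => by fun_prop)
    fun μ hμ => ⟨∑ j, μ j • (u j - v j),
      hC.sum_mem (fun j _ => hμ.1 j) hμ.2 fun j _ => subset_convexHull ℝ _ ⟨j, rfl⟩,
      sum_mul_norm_sq_sub_norm_sq_nonpos hmaj w hμ⟩
  refine ⟨w + x, fun i => ?_, by rwa [add_sub_cancel_left]⟩
  exact (sq_le_sq₀ (norm_nonneg _) (norm_nonneg _)).1 (sub_nonpos.1 (hx i))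
end

section
/- Let v : ℝⁿ → ℝᵐ be an affine 1-Lipschitz map, let x₁, …, x_k ∈ ℝⁿ, let u₁, …, u_k ∈ ℝᵐ satisfy ‖uᵢ − uⱼ‖ ≤ ‖xᵢ − xⱼ‖ for all i, j = 1, …, k, and let x ∈ ℝⁿ. Then there exists p ∈ ℝᵐ such that ‖p − uᵢ‖ ≤ ‖x − xᵢ‖ for all i = 1, …, k and p − v(x) lies in the convex hull of {u₁ − v(x₁), …, u_k − v(x_k)}. -/
/-!
Parametrise candidate points as `p = v x₀ + q` with `q` in the convex hull `K` of the
`uᵢ - v xᵢ`, and set `fⱼ q = ‖p - uⱼ‖² - ‖x₀ - xⱼ‖²`; these are convex and continuous on the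
compact convex set `K`. For weights `μ` in the simplex, the choice `q = ∑ μᵢ (uᵢ - v xᵢ)` gives
`p - ū = v x₀ - v x̄` (barycentres `ū`, `x̄`, using that `v` is affine), and splitting
`∑ μⱼ ‖p - uⱼ‖²` into `‖p - ū‖²` plus the spread `½ ∑ μᵢ μⱼ ‖uᵢ - uⱼ‖²` (and likewise for the
`xⱼ`) shows `∑ μⱼ fⱼ q ≤ 0`. Sion's minimax theorem applied to `(q, μ) ↦ ∑ μⱼ fⱼ q` on
`K × Δ` then yields a single `q` with every `fⱼ q ≤ 0`.
-/

open Finset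

section Spread

variable {ι E F : Type*} [Fintype ι] [NormedAddCommGroup E] [InnerProductSpace ℝ E]
  [NormedAddCommGroup F] [InnerProductSpace ℝ F]

theorem sum_mul_norm_sub_sq_eq {w : ι → ℝ} (hw : ∑ i, w i = 1) (a : E) (b : ι → E) :
    ∑ j, w j * ‖a - b j‖ ^ 2
      = ‖a - ∑ i, w i • b i‖ ^ 2 + ∑ j, w j * ‖∑ i, w i • b i - b j‖ ^ 2 := by
  set c := ∑ i, w i • b i
  -- the cross terms cancel because `c` is the barycentre of the `b j`
  have hcross : ∑ j, w j * inner ℝ (a - c) (c - b j) = 0 := by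
    have : ∑ j, w j • (c - b j) = 0 := by
      simp only [smul_sub, sum_sub_distrib, ← sum_smul, hw, one_smul, c, sub_self]
    simp_rw [← real_inner_smul_right, ← inner_sum, this, inner_zero_right]
  calc ∑ j, w j * ‖a - b j‖ ^ 2
      = ∑ j, (w j * ‖a - c‖ ^ 2 + 2 * (w j * inner ℝ (a - c) (c - b j))
          + w j * ‖c - b j‖ ^ 2) := by
        refine sum_congr rfl fun j _ => ?_
        rw [← sub_add_sub_cancel a c (b j), norm_add_sq_real]
        ring
    _ = ‖a - c‖ ^ 2 + ∑ j, w j * ‖c - b j‖ ^ 2 := by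
        rw [sum_add_distrib, sum_add_distrib, ← mul_sum, hcross, ← sum_mul, hw]
        ring

theorem sum_sum_mul_norm_sub_sq_eq {w : ι → ℝ} (hw : ∑ i, w i = 1) (b : ι → E) :
    ∑ i, ∑ j, w i * w j * ‖b i - b j‖ ^ 2 = 2 * ∑ j, w j * ‖∑ i, w i • b i - b j‖ ^ 2 := by
  calc ∑ i, ∑ j, w i * w j * ‖b i - b j‖ ^ 2
      = ∑ i, w i * (‖b i - ∑ l, w l • b l‖ ^ 2 + ∑ j, w j * ‖∑ l, w l • b l - b j‖ ^ 2) := by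
        simp_rw [← sum_mul_norm_sub_sq_eq hw, mul_sum, mul_assoc]
    _ = 2 * ∑ j, w j * ‖∑ i, w i • b i - b j‖ ^ 2 := by
        simp_rw [mul_add, sum_add_distrib, ← sum_mul, hw, norm_sub_rev (b _)]
        ring

theorem sum_mul_norm_sum_smul_sub_sq_le {w : ι → ℝ} (hw₀ : ∀ i, 0 ≤ w i)
    (hw : ∑ i, w i = 1) {x : ι → E} {u : ι → F} (hu : ∀ i j, ‖u i - u j‖ ≤ ‖x i - x j‖) :
    ∑ j, w j * ‖∑ i, w i • u i - u j‖ ^ 2 ≤ ∑ j, w j * ‖∑ i, w i • x i - x j‖ ^ 2 := by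
  have h := sum_le_sum fun i (_ : i ∈ univ) => sum_le_sum fun j (_ : j ∈ univ) =>
    mul_le_mul_of_nonneg_left (pow_le_pow_left₀ (norm_nonneg _) (hu i j) 2)
      (mul_nonneg (hw₀ i) (hw₀ j))
  rw [sum_sum_mul_norm_sub_sq_eq hw, sum_sum_mul_norm_sub_sq_eq hw] at h
  linarith

theorem sum_mul_norm_sub_sq_le_of_norm_sub_sum_smul_le {w : ι → ℝ} (hw₀ : ∀ i, 0 ≤ w i)
    (hw : ∑ i, w i = 1) {x : ι → E} {u : ι → F} (hu : ∀ i j, ‖u i - u j‖ ≤ ‖x i - x j‖)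
    {p : F} {y : E} (hpy : ‖p - ∑ i, w i • u i‖ ≤ ‖y - ∑ i, w i • x i‖) :
    ∑ j, w j * ‖p - u j‖ ^ 2 ≤ ∑ j, w j * ‖y - x j‖ ^ 2 := by
  rw [sum_mul_norm_sub_sq_eq hw p u, sum_mul_norm_sub_sq_eq hw y x]
  exact add_le_add (pow_le_pow_left₀ (norm_nonneg _) hpy 2)
    (sum_mul_norm_sum_smul_sub_sq_le hw₀ hw hu)

end Spread

theorem AffineMap.map_sum_smul {k V W ι : Type*} [Ring k] [AddCommGroup V] [Module k V]
    [AddCommGroup W] [Module k W] [Fintype ι] (f : V →ᵃ[k] W) {w : ι → k} (hw : ∑ i, w i = 1)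
    (x : ι → V) : f (∑ i, w i • x i) = ∑ i, w i • f (x i) := by
  simpa only [Finset.affineCombination_eq_linear_combination _ _ _ hw, Function.comp_apply] using
    Finset.univ.map_affineCombination x w hw f

theorem exists_affineMap_coe_eq {E F : Type*} [NormedAddCommGroup E] [NormedSpace ℝ E]
    [NormedAddCommGroup F] [NormedSpace ℝ F] {v : E → F}
    (hv : ∀ x y : E, ∀ t ∈ Set.Icc (0 : ℝ) 1, v (t • x + (1 - t) • y) = t • v x + (1 - t) • v y)
    (hc : Continuous v) : ∃ V : E →ᵃ[ℝ] F, ⇑V = v := by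
  have hmid (x y : E) : v (midpoint ℝ x y) = midpoint ℝ (v x) (v y) := by
    have h := hv x y 2⁻¹ ⟨by norm_num, by norm_num⟩
    rw [show (1 : ℝ) - 2⁻¹ = 2⁻¹ by norm_num, ← smul_add, ← smul_add] at h
    rw [midpoint_eq_smul_add, midpoint_eq_smul_add, invOf_eq_inv, h]
  exact ⟨AffineMap.ofMapMidpoint v hmid hc, rfl⟩

theorem convexOn_norm_add_sub_sq {E : Type*} [NormedAddCommGroup E] [NormedSpace ℝ E]
    {s : Set E} (hs : Convex ℝ s) (a b : E) : ConvexOn ℝ s fun q => ‖a + q - b‖ ^ 2 := by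
  refine ((convexOn_dist (b - a) hs).pow (fun _ _ => dist_nonneg) 2).congr fun q _ => ?_
  rw [Pi.pow_apply, dist_eq_norm, sub_sub_eq_add_sub, add_comm q]

theorem exists_mem_forall_nonpos_of_convexOn {E ι : Type*} [TopologicalSpace E]
    [AddCommGroup E] [Module ℝ E] [IsTopologicalAddGroup E] [ContinuousSMul ℝ E]
    [Fintype ι] [Nonempty ι] {K : Set E} (hK : Convex ℝ K) (hKc : IsCompact K) (f : ι → E → ℝ)
    (hconv : ∀ j, ConvexOn ℝ K (f j)) (hcont : ∀ j, ContinuousOn (f j) K)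
    (hsum : ∀ μ ∈ stdSimplex ℝ ι, ∃ q ∈ K, ∑ j, μ j • f j q ≤ 0) :
    ∃ q ∈ K, ∀ j, f j q ≤ 0 := by
  classical
  set Δ := stdSimplex ℝ ι
  have hΔ : Δ.Nonempty := ⟨_, single_mem_stdSimplex ℝ (Classical.arbitrary ι)⟩
  obtain ⟨q₀, hq₀, -⟩ := hsum _ hΔ.some_mem
  have hconcave (q : E) : ConcaveOn ℝ Δ fun μ => ∑ j, μ j • f j q :=
    ((Fintype.linearCombination ℝ fun j => f j q).concaveOn (convex_stdSimplex ℝ ι)).congr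
      fun μ _ => Fintype.linearCombination_apply _ _ μ
  have hconvex (μ) (hμ : μ ∈ Δ) : ConvexOn ℝ K fun q => ∑ j, μ j • f j q := by
    simpa only [Finset.sum_fn] using Finset.sum_induction _ (ConvexOn ℝ K)
      (fun _ _ => ConvexOn.add) (convexOn_const 0 hK) fun j _ => (hconv j).smul (hμ.1 j)
  obtain ⟨a, ha, b, hb, hsaddle⟩ :=
    Sion.exists_isSaddlePointOn (f := fun q μ => ∑ j, μ j • f j q) ⟨q₀, hq₀⟩ hK hKc
      (fun μ _ => (continuousOn_finsetSum _ fun j _ =>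
        (hcont j).const_smul (μ j)).lowerSemicontinuousOn)
      (fun μ hμ => (hconvex μ hμ).quasiconvexOn) (convex_stdSimplex ℝ ι) hΔ
      (isCompact_stdSimplex ℝ ι)
      (fun q _ => (by fun_prop : Continuous fun μ : ι → ℝ => ∑ j, μ j • f j q)
        |>.continuousOn.upperSemicontinuousOn)
      (fun q _ => (hconcave q).quasiconcaveOn)
  -- `f j a` is the saddle function at the vertex `Pi.single j 1`; bound it by its value at `(q, b)`
  obtain ⟨q, hq, hqb⟩ := hsum b hb
  refine ⟨a, ha, fun j => ?_⟩
  simpa [Pi.single_apply] using (hsaddle q hq _ (single_mem_stdSimplex ℝ j)).trans hqb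

theorem stmt_18 (n m k : ℕ) (hk : 0 < k)
    (v : EuclideanSpace ℝ (Fin n) → EuclideanSpace ℝ (Fin m))
    (hvaff : ∀ x y : EuclideanSpace ℝ (Fin n), ∀ t ∈ Set.Icc (0 : ℝ) 1,
      v (t • x + (1 - t) • y) = t • v x + (1 - t) • v y)
    (hvlip : ∀ x y : EuclideanSpace ℝ (Fin n), ‖v x - v y‖ ≤ ‖x - y‖)
    (x : Fin k → EuclideanSpace ℝ (Fin n))
    (u : Fin k → EuclideanSpace ℝ (Fin m))
    (hu : ∀ i j, ‖u i - u j‖ ≤ ‖x i - x j‖)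
    (x₀ : EuclideanSpace ℝ (Fin n)) :
    ∃ p : EuclideanSpace ℝ (Fin m),
      (∀ i, ‖p - u i‖ ≤ ‖x₀ - x i‖) ∧
      p - v x₀ ∈ convexHull ℝ (Set.range fun i => u i - v (x i)) := by
  have : Nonempty (Fin k) := ⟨⟨0, hk⟩⟩
  obtain ⟨V, rfl⟩ := exists_affineMap_coe_eq hvaff
    (LipschitzWith.of_dist_le' (K := 1) fun a b => by simpa [dist_eq_norm] using hvlip a b).continuous
  set c := fun i => u i - V (x i)
  have hK : Convex ℝ (convexHull ℝ (Set.range c)) := convex_convexHull ℝ _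
  have hsum (μ) (hμ : μ ∈ stdSimplex ℝ (Fin k)) : ∃ q ∈ convexHull ℝ (Set.range c),
      ∑ j, μ j • (‖V x₀ + q - u j‖ ^ 2 - ‖x₀ - x j‖ ^ 2) ≤ 0 := by
    refine ⟨∑ i, μ i • c i,
      hK.sum_mem (fun i _ => hμ.1 i) hμ.2 fun i _ => subset_convexHull ℝ _ ⟨i, rfl⟩, ?_⟩
    have hbary : V x₀ + ∑ i, μ i • c i - ∑ i, μ i • u i = V x₀ - V (∑ i, μ i • x i) := by
      simp only [c, smul_sub, sum_sub_distrib, V.map_sum_smul hμ.2]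
      abel
    simp only [smul_eq_mul, mul_sub, sum_sub_distrib, sub_nonpos]
    exact sum_mul_norm_sub_sq_le_of_norm_sub_sum_smul_le hμ.1 hμ.2 hu (hbary ▸ hvlip _ _)
  obtain ⟨q, hq, hle⟩ := exists_mem_forall_nonpos_of_convexOn hK
    ((Set.finite_range c).isCompact_convexHull ℝ) _
    (fun j => (convexOn_norm_add_sub_sq hK _ _).sub (concaveOn_const _ hK))
    (fun j => by fun_prop) hsum
  refine ⟨V x₀ + q, fun i => ?_, by simpa using hq⟩
  exact (pow_le_pow_iff_left₀ (norm_nonneg _) (norm_nonneg _) two_ne_zero).1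
    (sub_nonpos.1 (hle i))
end
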